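/- arXiv:math/9806145 — 10 statements merged into one kernel-verified Lean document; each statement's English description precedes it below -/
import Mathlib

section
/- Let A be a unital topological algebra in which the set of invertible elements is open (a Q-algebra). Then for every n, the set Lg_n(A) of n-tuples (a_1,...,a_n) generating A as a left ideal (i.e. A a_1 + ... + A a_n = A) is open in A^n. -/
/-- `Lg n A`: the set of `n`-tuples generating `A` as a left ideal. -/
def Lg (A : Type*) [Ring A] (n : ℕ) : Set (Fin n → A) :=
  {a | ∃ w : Fin n → A, ∑ i, w i * a i = 1}

/-- In a unital topological `Q`-algebra (invertibles open), `Lg_n(A)` is open in `A^n`. -/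
theorem stmt_0 (A : Type*) [Ring A] [Algebra ℂ A] [TopologicalSpace A] [IsTopologicalRing A]
    (hQ : IsOpen {x : A | IsUnit x}) (n : ℕ) :
    IsOpen (Lg A n) := by
  have hEq : Lg A n = ⋃ w : Fin n → A,
      (fun b : Fin n → A => ∑ i, w i * b i) ⁻¹' {x : A | IsUnit x} := by
    ext a
    constructor
    · rintro ⟨w, hw⟩
      exact Set.mem_iUnion.2 ⟨w, by simp [hw]⟩
    · intro h
      obtain ⟨w, hw⟩ := Set.mem_iUnion.1 h
      obtain ⟨u, hu⟩ := hw
      refine ⟨fun i => (↑u⁻¹ : A) * w i, ?_⟩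
      calc ∑ i, (↑u⁻¹ : A) * w i * a i
          = (↑u⁻¹ : A) * ∑ i, w i * a i := by
            rw [Finset.mul_sum]; exact Finset.sum_congr rfl fun i _ => (mul_assoc _ _ _)
        _ = 1 := by simp only [] at hu; rw [← hu]; exact u.inv_mul
  rw [hEq]
  exact isOpen_iUnion fun w => hQ.preimage (by
    exact continuous_finset_sum _ fun i _ => continuous_const.mul (continuous_apply i))
end

section
/- Let A be a unital Banach algebra with Bass stable rank at most n, and let f : A → M be a surjective morphism of left A-modules onto a left Banach A-module M. Then the induced map f_n : Lg_n(A) → Gen_n(M), (a_1,...,a_n) ↦ (f(a_1),...,f(a_n)), is surjective onto Gen_n(M). -/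
/-- `Gen n M`: `n`-tuples of `M` generating `M` as an `A`-module. -/
def Gen (A : Type*) [Ring A] {M : Type*} [AddCommGroup M] [Module A M] (n : ℕ) :
    Set (Fin n → M) :=
  {v | ∀ m : M, ∃ w : Fin n → A, ∑ i, w i • v i = m}

/-- If `Bsr(A) ≤ n` and `f : A → M` is a surjective morphism of left `A`-modules onto a left
Banach `A`-module `M`, then the induced map `Lg_n(A) → Gen_n(M)` is surjective. -/
theorem stmt_2 (A : Type*) [NormedRing A] [NormedAlgebra ℂ A] [CompleteSpace A] (n : ℕ)
    (hBsr : ∀ a : Fin (n + 1) → A, a ∈ Lg A (n + 1) →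
      ∃ c : Fin n → A, (fun i : Fin n => a i.castSucc + c i * a (Fin.last n)) ∈ Lg A n)
    (M : Type*) [NormedAddCommGroup M] [Module A M] [IsBoundedSMul A M]
    (f : A →ₗ[A] M) (hf : Function.Surjective f) :
    ∀ v ∈ Gen A (n := n) (M := M), ∃ a ∈ Lg A n, ∀ i, f (a i) = v i := by
  intro v hv
  choose b hb using fun i => hf (v i)
  obtain ⟨w, hw⟩ := hv (f 1)
  set d : A := 1 - ∑ i, w i * b i with hd
  have hfd : f d = 0 := by
    have : f (∑ i, w i * b i) = ∑ i, w i • v i := by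
      rw [map_sum]
      exact Finset.sum_congr rfl fun i _ => by
        rw [← smul_eq_mul, map_smul, hb]
    rw [hd, map_sub, this, hw, sub_self]
  have hsnoc : (Fin.snoc b d : Fin (n + 1) → A) ∈ Lg A (n + 1) := by
    refine ⟨Fin.snoc w 1, ?_⟩
    rw [Fin.sum_univ_castSucc]
    simp only [Fin.snoc_castSucc, Fin.snoc_last, one_mul]
    rw [hd]; abel
  obtain ⟨c, hc⟩ := hBsr _ hsnoc
  simp only [Fin.snoc_castSucc, Fin.snoc_last] at hc
  refine ⟨fun i => b i + c i * d, hc, fun i => ?_⟩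
  rw [map_add, ← smul_eq_mul, map_smul, hfd, smul_zero, add_zero, hb]
end

section
/- Let A be a unital topological Q-algebra. If for every closed left ideal J of A the quotient map π : A → A/J induces a surjection π_n : Lg_n(A) → Gen_n(A/J), then the Bass stable rank of A is at most n. -/
lemma lg_isOpen {A : Type*} [Ring A] [TopologicalSpace A] [IsTopologicalRing A]
    (hQ : IsOpen {x : A | IsUnit x}) (n : ℕ) : IsOpen (Lg A n) := by
  have hEq : Lg A n =
      ⋃ w : Fin n → A, (fun x : Fin n → A => ∑ i, w i * x i) ⁻¹' {x : A | IsUnit x} := by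
    ext x
    simp only [Set.mem_iUnion, Set.mem_preimage, Set.mem_setOf_eq]
    constructor
    · rintro ⟨w, hw⟩; exact ⟨w, hw ▸ isUnit_one⟩
    · rintro ⟨w, hw⟩
      refine ⟨fun i => ↑hw.unit⁻¹ * w i, ?_⟩
      have : ∑ i, (↑hw.unit⁻¹ * w i) * x i = ↑hw.unit⁻¹ * ∑ i, w i * x i := by
        rw [Finset.mul_sum]; simp [mul_assoc]
      rw [this]
      exact hw.val_inv_mul
  rw [hEq]
  exact isOpen_iUnion fun w => (continuous_finset_sum _ fun i _ =>
    continuous_const.mul (continuous_apply i)).isOpen_preimage _ hQ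

/-- If for every closed left ideal `J` of the unital topological `Q`-algebra `A`
the quotient map `A → A/J` induces a surjection `Lg_n(A) → Gen_n(A/J)`,
then `Bsr(A) ≤ n`. -/
theorem stmt_3 (A : Type*) [Ring A] [Algebra ℂ A] [TopologicalSpace A] [IsTopologicalRing A]
    (hQ : IsOpen {x : A | IsUnit x}) (n : ℕ)
    (h : ∀ J : Submodule A A, IsClosed (J : Set A) →
      ∀ v ∈ Gen A (n := n) (M := A ⧸ J), ∃ a ∈ Lg A n, ∀ i, J.mkQ (a i) = v i) :
    ∀ a : Fin (n + 1) → A, a ∈ Lg A (n + 1) →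
      ∃ c : Fin n → A, (fun i : Fin n => a i.castSucc + c i * a (Fin.last n)) ∈ Lg A n := by
  intro a ha
  obtain ⟨w, hw⟩ := ha
  set S : Submodule A A := Submodule.span A {a (Fin.last n)} with hS
  set J : Submodule A A := S.topologicalClosure with hJdef
  have haJ : a (Fin.last n) ∈ J :=
    S.le_topologicalClosure (Submodule.mem_span_singleton_self _)
  -- the images of the first n coordinates generate A ⧸ J
  have hv : (fun i : Fin n => J.mkQ (a i.castSucc)) ∈ Gen A (n := n) (M := A ⧸ J) := by
    intro m
    obtain ⟨x, rfl⟩ := J.mkQ_surjective m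
    refine ⟨fun i => x * w i.castSucc, ?_⟩
    have key : ∑ i : Fin n, (x * w i.castSucc) * a i.castSucc
        = x - (x * w (Fin.last n)) * a (Fin.last n) := by
      have hx : x * ∑ i : Fin (n + 1), w i * a i = x := by rw [hw, mul_one]
      rw [Fin.sum_univ_castSucc, mul_add, Finset.mul_sum] at hx
      simp only [← mul_assoc] at hx
      exact eq_sub_of_add_eq hx
    have : ∑ i : Fin n, (x * w i.castSucc) • J.mkQ (a i.castSucc)
        = J.mkQ (∑ i : Fin n, (x * w i.castSucc) * a i.castSucc) := by
      rw [map_sum]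
      exact Finset.sum_congr rfl fun i _ => (map_smul J.mkQ _ _).symm
    rw [this, key, map_sub, sub_eq_self, ← smul_eq_mul,
      Submodule.mkQ_apply, Submodule.Quotient.mk_eq_zero]
    exact J.smul_mem _ haJ
  obtain ⟨b, hb, hab⟩ := h J S.isClosed_topologicalClosure _ hv
  -- b i - a i.castSucc ∈ J = closure S
  have hd : ∀ i, b i - a i.castSucc ∈ closure (S : Set A) := by
    intro i
    have : b i - a i.castSucc ∈ J := by
      rw [← Submodule.Quotient.eq]
      exact hab i
    exact this
  set d : Fin n → A := fun i => b i - a i.castSucc with hddef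
  have hdmem : d ∈ closure (Set.pi Set.univ fun _ : Fin n => (S : Set A)) := by
    rw [closure_pi_set]
    exact fun i _ => hd i
  set V : Set (Fin n → A) := (fun x : Fin n → A => fun i => a i.castSucc + x i) ⁻¹' Lg A n
    with hVdef
  have hVopen : IsOpen V :=
    (continuous_pi fun i => continuous_const.add (continuous_apply i)).isOpen_preimage _
      (lg_isOpen hQ n)
  have hdV : d ∈ V := by
    have : (fun i => a i.castSucc + d i) = b := by
      funext i; simp [hddef]
    simpa [hVdef, Set.mem_preimage, this] using hb
  obtain ⟨x, hxV, hxS⟩ := (mem_closure_iff.mp hdmem) V hVopen hdV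
  choose c hc using fun i => Submodule.mem_span_singleton.mp (hxS i (Set.mem_univ i))
  refine ⟨c, ?_⟩
  have : (fun i : Fin n => a i.castSucc + c i * a (Fin.last n))
      = fun i => a i.castSucc + x i := by
    funext i
    rw [← hc i, smul_eq_mul]
  rw [this]
  exact hxV
end

section
/- Let A be a unital topological Q-algebra satisfying the bilateral Bass stable rank condition at level n. Then every surjective unital continuous algebra morphism f : A → B onto a topological algebra B induces a surjective map f_n : Lg_n(A) → Lg_n(B). -/
/-- If the unital topological `Q`-algebra `A` satisfies the bilateral Bass condition `(bBsr)_n`,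
then every surjective continuous unital algebra morphism `f : A → B` induces a surjection
`Lg_n(A) → Lg_n(B)`. -/
theorem stmt_4 (A B : Type*) [Ring A] [Algebra ℂ A] [TopologicalSpace A] [IsTopologicalRing A]
    [Ring B] [Algebra ℂ B] [TopologicalSpace B] [IsTopologicalRing B]
    (hQ : IsOpen {x : A | IsUnit x}) (n : ℕ)
    (hbBsr : ∀ a : Fin (n + 1) → A, a ∈ Lg A (n + 1) →
      ∃ c d : Fin n → A,
        (fun i : Fin n => a i.castSucc + c i * a (Fin.last n) * d i) ∈ Lg A n)
    (f : A →+* B) (hfc : Continuous f) (hfs : Function.Surjective f) :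
    ∀ b ∈ Lg B n, ∃ a ∈ Lg A n, ∀ i, f (a i) = b i := by
  intro b hb
  obtain ⟨w, hw⟩ := hb
  choose a' ha' using fun i => hfs (b i)
  choose w' hw' using fun i => hfs (w i)
  set s : A := ∑ i, w' i * a' i with hs
  have hfs1 : f s = 1 := by
    simp [hs, map_sum, hw', ha', hw]
  have hmem : (Fin.snoc a' (1 - s) : Fin (n + 1) → A) ∈ Lg A (n + 1) := by
    refine ⟨Fin.snoc w' 1, ?_⟩
    rw [Fin.sum_univ_castSucc]
    simp [Fin.snoc_castSucc, Fin.snoc_last, hs]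
  obtain ⟨c, d, hcd⟩ := hbBsr _ hmem
  refine ⟨fun i => a' i + c i * (1 - s) * d i, ?_, fun i => ?_⟩
  · simpa [Fin.snoc_castSucc, Fin.snoc_last] using hcd
  · simp [ha', hfs1]
end

section
/- Let A be a unital Banach algebra satisfying the small-norm stable rank condition at level n. Then the topological stable rank of A is at most n, i.e. Lg_n(A) is dense in A^n. More precisely, the condition of Theorem 2.6(ii) holds: for every ε > 0 and (a_1,...,a_{n+1}) ∈ Lg_{n+1}(A) there exist c_i with (a_i + c_i a_{n+1})_i ∈ Lg_n(A) and ‖c_i a_{n+1}‖ < ε. -/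
theorem snoc_one_mem_Lg {A : Type*} [Ring A] {n : ℕ} (b : Fin n → A) :
    (Fin.snoc b 1 : Fin (n + 1) → A) ∈ Lg A (n + 1) :=
  ⟨Fin.snoc 0 1, by simp [Fin.sum_univ_castSucc]⟩

theorem exists_pos_forall_norm_mul_lt {A : Type*} [SeminormedRing A] (x : A) {ε : ℝ}
    (hε : 0 < ε) : ∃ δ > 0, ∀ c : A, ‖c‖ < δ → ‖c * x‖ < ε := by
  obtain ⟨δ, hδ, hsmall⟩ :=
    Metric.tendsto_nhds_nhds.1 ((continuous_mul_const x).tendsto 0) ε hε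
  exact ⟨δ, hδ, fun c hc => by simpa using hsmall (x := c) (by simpa using hc)⟩

def SmallNormCondition (A : Type*) [NormedRing A] (n : ℕ) : Prop :=
  ∀ ε > (0 : ℝ), ∀ a : Fin (n + 1) → A, a ∈ Lg A (n + 1) →
    ∃ c : Fin n → A, (∀ i, ‖c i‖ < ε) ∧
      (fun i : Fin n => a i.castSucc + c i * a (Fin.last n)) ∈ Lg A n

namespace SmallNormCondition

variable {A : Type*} [NormedRing A] {n : ℕ}

theorem exists_norm_mul_lt (h : SmallNormCondition A n) {ε : ℝ} (hε : 0 < ε)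
    (a : Fin (n + 1) → A) (ha : a ∈ Lg A (n + 1)) :
    ∃ c : Fin n → A, (∀ i, ‖c i * a (Fin.last n)‖ < ε) ∧
      (fun i : Fin n => a i.castSucc + c i * a (Fin.last n)) ∈ Lg A n := by
  obtain ⟨δ, hδ, hmul⟩ := exists_pos_forall_norm_mul_lt (a (Fin.last n)) hε
  obtain ⟨c, hc, hmem⟩ := h δ hδ a ha
  exact ⟨c, fun i => hmul (c i) (hc i), hmem⟩

/-- Apply the condition to `(b, 1)`: the perturbation `b + c` of `b` is then in `Lg A n`. -/
theorem dense_Lg (h : SmallNormCondition A n) : Dense (Lg A n) := by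
  refine Metric.dense_iff.2 fun b r hr => ?_
  obtain ⟨c, hc, hmem⟩ := h r hr (Fin.snoc b 1) (snoc_one_mem_Lg b)
  simp only [Fin.snoc_castSucc, Fin.snoc_last, mul_one] at hmem
  refine ⟨_, ?_, hmem⟩
  rw [Metric.mem_ball, dist_pi_lt_iff hr]
  intro i
  simpa [dist_eq_norm] using hc i

end SmallNormCondition

theorem stmt_7_general (A : Type*) [NormedRing A] (n : ℕ)
    (hssr : ∀ ε > (0 : ℝ), ∀ a : Fin (n + 1) → A, a ∈ Lg A (n + 1) →
      ∃ c : Fin n → A, (∀ i, ‖c i‖ < ε) ∧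
        (fun i : Fin n => a i.castSucc + c i * a (Fin.last n)) ∈ Lg A n) :
    (∀ ε > (0 : ℝ), ∀ a : Fin (n + 1) → A, a ∈ Lg A (n + 1) →
      ∃ c : Fin n → A, (∀ i, ‖c i * a (Fin.last n)‖ < ε) ∧
        (fun i : Fin n => a i.castSucc + c i * a (Fin.last n)) ∈ Lg A n) ∧
      Dense (Lg A n) :=
  ⟨fun _ hε a ha => SmallNormCondition.exists_norm_mul_lt hssr hε a ha,
    SmallNormCondition.dense_Lg hssr⟩

/-- In a unital Banach algebra, the small-norm stable rank condition at level `n` implies the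
condition of Theorem 2.6(ii) at level `n` and the density of `Lg_n(A)` in `A^n`
(i.e. `tsr(A) ≤ n`). -/
theorem stmt_7 (A : Type*) [NormedRing A] [NormedAlgebra ℂ A] [CompleteSpace A] (n : ℕ)
    (hssr : ∀ ε > (0 : ℝ), ∀ a : Fin (n + 1) → A, a ∈ Lg A (n + 1) →
      ∃ c : Fin n → A, (∀ i, ‖c i‖ < ε) ∧
        (fun i : Fin n => a i.castSucc + c i * a (Fin.last n)) ∈ Lg A n) :
    (∀ ε > (0 : ℝ), ∀ a : Fin (n + 1) → A, a ∈ Lg A (n + 1) →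
      ∃ c : Fin n → A, (∀ i, ‖c i * a (Fin.last n)‖ < ε) ∧
        (fun i : Fin n => a i.castSucc + c i * a (Fin.last n)) ∈ Lg A n) ∧
      Dense (Lg A n) :=
  stmt_7_general A n hssr
end

section
/- Let X be a compact Hausdorff (or paracompact Hausdorff) topological space and A a unital Banach algebra. An n-tuple (f_1,...,f_n) of continuous functions X → A belongs to Lg_n(C(X,A)) if and only if (f_1(x),...,f_n(x)) ∈ Lg_n(A) for every x ∈ X. That is, Lg_n(C(X,A)) ≅ C(X, Lg_n(A)). -/
/-!
For fixed `y`, the solutions `w` of `∑ wᵢ fᵢ(y) = 1` form an affine, hence convex, subset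
of `Aⁿ`. A pointwise solution `w` at `x` gives the local continuous solutions
`y ↦ z(y)⁻¹ w`, where `z(y) = ∑ wᵢ fᵢ(y)` stays a unit near `x`, and convexity lets a
partition of unity glue them into a global continuous solution.
-/

open Topology

theorem Lg.map {A B : Type*} [Ring A] [Ring B] {n : ℕ} (φ : A →+* B) {a : Fin n → A}
    (ha : a ∈ Lg A n) : φ ∘ a ∈ Lg B n := by
  obtain ⟨w, hw⟩ := ha
  exact ⟨φ ∘ w, by simpa using congrArg φ hw⟩

theorem convex_setOf_sum_mul_eq_one {ι A : Type*} [Fintype ι] [Ring A] [Module ℝ A]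
    [IsScalarTower ℝ A A] (a : ι → A) : Convex ℝ {w : ι → A | ∑ i, w i * a i = 1} := by
  intro v hv w hw s t _ _ hst
  simp only [Set.mem_ofPred_eq, Pi.add_apply, Pi.smul_apply, add_mul, smul_mul_assoc,
    Finset.sum_add_distrib, ← Finset.smul_sum] at hv hw ⊢
  rw [hv, hw, ← add_smul, hst, one_smul]

theorem exists_continuousOn_sum_mul_eq_one_nhds {X ι A : Type*} [TopologicalSpace X]
    [Fintype ι] [NormedRing A] [HasSummableGeomSeries A] (f : ι → C(X, A)) {x : X}
    {w : ι → A} (hw : ∑ i, w i * f i x = 1) :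
    ∃ U ∈ 𝓝 x, ∃ g : X → ι → A, ContinuousOn g U ∧ ∀ y ∈ U, ∑ i, g y i * f i y = 1 := by
  set z : C(X, A) := ∑ i, ContinuousMap.const X (w i) * f i
  have hz : ∀ y, z y = ∑ i, w i * f i y := fun y => by simp [z]
  have hU : IsOpen {y | IsUnit (z y)} := Units.isOpen.preimage z.continuous
  have hxU : IsUnit (z x) := by rw [hz, hw]; exact isUnit_one
  refine ⟨_, hU.mem_nhds hxU, fun y i => Ring.inverse (z y) * w i, ?_, fun y hy => ?_⟩
  · refine continuousOn_pi.2 fun i => continuousOn_of_forall_continuousAt fun y hy => ?_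
    have hinv : ContinuousAt Ring.inverse (z y) :=
      hy.unit_spec ▸ NormedRing.inverse_continuousAt hy.unit
    exact (hinv.comp z.continuous.continuousAt).mul continuousAt_const
  · simp only [mul_assoc, ← Finset.mul_sum, ← hz]
    exact Ring.inverse_mul_cancel _ hy

/-- For a compact Hausdorff space `X` and a unital Banach algebra `A`, an `n`-tuple of
continuous functions `X → A` is in `Lg_n(C(X,A))` iff it is pointwise in `Lg_n(A)`,
i.e. `Lg_n(C(X,A)) ≅ C(X, Lg_n(A))`. -/
theorem stmt_9 (X : Type*) [TopologicalSpace X] [CompactSpace X] [T2Space X]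
    (A : Type*) [NormedRing A] [NormedAlgebra ℂ A] [CompleteSpace A] (n : ℕ)
    (f : Fin n → C(X, A)) :
    f ∈ Lg C(X, A) n ↔ ∀ x : X, (fun i => f i x) ∈ Lg A n := by
  refine ⟨fun hf x => Lg.map ((Pi.evalRingHom _ x).comp ContinuousMap.coeFnRingHom) hf,
    fun hpt => ?_⟩
  obtain ⟨g, hg⟩ := exists_continuous_forall_mem_convex_of_local
    (fun y => convex_setOf_sum_mul_eq_one fun i => f i y) fun x =>
      exists_continuousOn_sum_mul_eq_one_nhds f (hpt x).choose_spec
  refine ⟨fun i => ⟨fun y => g y i, by fun_prop⟩, ContinuousMap.ext fun y => ?_⟩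
  simpa using hg y
end

section
/- Let A and B be unital topological algebras, B a Q-algebra, and f : A → B a continuous dense near-unit full algebra morphism. Then f is n-full for every n: if (a_1,...,a_n) ∈ A^n and (f(a_1),...,f(a_n)) ∈ Lg_n(B), then (a_1,...,a_n) ∈ Lg_n(A). -/
/-- A continuous dense near-unit full morphism `f : A → B` into a topological `Q`-algebra `B`
is `n`-full for every `n`. -/
theorem stmt_10 (A B : Type*) [Ring A] [Algebra ℂ A] [TopologicalSpace A] [IsTopologicalRing A]
    [Ring B] [Algebra ℂ B] [TopologicalSpace B] [IsTopologicalRing B]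
    (hQ : IsOpen {x : B | IsUnit x})
    (f : A →+* B) (hfc : Continuous f) (hfd : DenseRange f)
    (hnuf : ∃ V : Set B, IsOpen V ∧ (0 : B) ∈ V ∧ ∀ a : A, f a - 1 ∈ V → IsUnit a) :
    ∀ n : ℕ, ∀ a : Fin n → A, (fun i => f (a i)) ∈ Lg B n → a ∈ Lg A n := by
  obtain ⟨V, hVopen, hV0, hVunit⟩ := hnuf
  intro n a ⟨w, hw⟩
  -- the map b ↦ ∑ b i * f (a i) is continuous
  have hg : Continuous (fun b : Fin n → B => ∑ i, b i * f (a i)) :=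
    continuous_finset_sum _ fun i _ => (continuous_apply i).mul continuous_const
  -- S : open neighborhood of w
  set S : Set (Fin n → B) :=
    (fun b : Fin n → B => ∑ i, b i * f (a i)) ⁻¹' ((fun y : B => y - 1) ⁻¹' V) with hS
  have hSopen : IsOpen S := hg.isOpen_preimage _ ((hVopen.preimage (by continuity)))
  have hwS : w ∈ S := by
    simp only [hS, Set.mem_preimage, hw, sub_self]
    exact hV0
  -- dense range of the product map
  have hdense : Dense (Set.range (fun u : Fin n → A => fun i => f (u i))) := by
    have : (fun u : Fin n → A => fun i => f (u i)) = Pi.map (fun _ : Fin n => ⇑f) := rfl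
    rw [this, Set.range_piMap]
    exact dense_pi Set.univ fun i _ => hfd
  obtain ⟨b, hbS, u, hu⟩ := hdense.inter_open_nonempty S hSopen ⟨w, hwS⟩
  subst hu
  have hsum : f (∑ i, u i * a i) - 1 ∈ V := by
    simpa [hS, map_sum, map_mul] using hbS
  obtain ⟨x, hx⟩ := hVunit _ hsum
  refine ⟨fun i => ↑x⁻¹ * u i, ?_⟩
  calc ∑ i, (↑x⁻¹ * u i) * a i = ↑x⁻¹ * ∑ i, u i * a i := by
        rw [Finset.mul_sum]; simp [mul_assoc]
    _ = 1 := by rw [← hx]; exact x.inv_mul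
end

section
/- Let A and B be unital Banach algebras (or topological Q-algebras) and f : A → B a continuous algebra morphism with dense image which is n-full (i.e. f_n^{-1}(Lg_n(B)) ⊆ Lg_n(A)). If Bsr(B) ≤ n, then Bsr(A) ≤ n. -/
/-!
Since `B` is a Banach algebra, `Lg B n` is open. Given `a ∈ Lg A (n + 1)`, its image lies in
`Lg B (n + 1)`, so `Bsr(B) ≤ n` yields `d` with `f(a_i) + d_i f(a_{n+1}) ∈ Lg B n`. The set of
`d` with this property is open, so by density it contains some `f ∘ c`, and `n`-fullness of `f`
pulls `a_i + c_i a_{n+1}` back into `Lg A n`.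
-/

/-- `HasBsrLE A n` is the condition `Bsr(A) ≤ n`. -/
def HasBsrLE (A : Type*) [Ring A] (n : ℕ) : Prop :=
  ∀ a ∈ Lg A (n + 1), ∃ c : Fin n → A, (fun i => a i.castSucc + c i * a (Fin.last n)) ∈ Lg A n

theorem map_mem_Lg {A B : Type*} [Ring A] [Ring B] (f : A →+* B) {n : ℕ} {a : Fin n → A}
    (ha : a ∈ Lg A n) : (fun i => f (a i)) ∈ Lg B n := by
  obtain ⟨w, hw⟩ := ha
  exact ⟨fun i => f (w i), by simp only [← map_mul, ← map_sum, hw, map_one]⟩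

theorem mem_Lg_of_isUnit_sum {B : Type*} [Ring B] {n : ℕ} {b w : Fin n → B}
    (hu : IsUnit (∑ i, w i * b i)) : b ∈ Lg B n := by
  obtain ⟨u, hu⟩ := hu
  refine ⟨fun i => ↑u⁻¹ * w i, ?_⟩
  simp only [mul_assoc, ← Finset.mul_sum, ← hu, Units.inv_mul]

/-- Any tuple close enough to a generating tuple `b` generates, with the coefficients of `b`
multiplied on the left by a correcting unit. -/
theorem isOpen_Lg (B : Type*) [NormedRing B] [CompleteSpace B] (n : ℕ) : IsOpen (Lg B n) := by
  refine isOpen_iff_forall_mem_open.mpr fun b ⟨w, hw⟩ => ?_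
  refine ⟨(fun x : Fin n → B => ∑ i, w i * x i) ⁻¹' {x | IsUnit x},
    fun x hx => mem_Lg_of_isUnit_sum hx, Units.isOpen.preimage (by fun_prop), ?_⟩
  simp only [Set.mem_preimage, Set.mem_ofPred_eq, hw, isUnit_one]

theorem HasBsrLE.of_denseRange {A B : Type*} [Ring A] [Ring B] [TopologicalSpace B]
    [IsTopologicalRing B] {n : ℕ} (hLg : IsOpen (Lg B n)) (f : A →+* B) (hfd : DenseRange f)
    (hfull : ∀ a : Fin n → A, (fun i => f (a i)) ∈ Lg B n → a ∈ Lg A n) (hB : HasBsrLE B n) :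
    HasBsrLE A n := by
  intro a ha
  obtain ⟨d, hd⟩ := hB _ (map_mem_Lg f ha)
  let reduce : (Fin n → B) → Fin n → B :=
    fun d i => f (a i.castSucc) + d i * f (a (Fin.last n))
  have hopen : IsOpen (reduce ⁻¹' Lg B n) := hLg.preimage (by fun_prop)
  obtain ⟨c, hc⟩ := (DenseRange.piMap fun _ => hfd).exists_mem_open hopen ⟨d, hd⟩
  refine ⟨c, hfull _ ?_⟩
  simp only [map_add, map_mul]
  exact hc

theorem stmt_11_general (A B : Type*) [NormedRing A]
    [NormedRing B] [CompleteSpace B]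
    (f : A →+* B) (hfd : DenseRange f)
    (n : ℕ)
    (hfull : ∀ a : Fin n → A, (fun i => f (a i)) ∈ Lg B n → a ∈ Lg A n)
    (hBsrB : ∀ b : Fin (n + 1) → B, b ∈ Lg B (n + 1) →
      ∃ d : Fin n → B, (fun i : Fin n => b i.castSucc + d i * b (Fin.last n)) ∈ Lg B n) :
    ∀ a : Fin (n + 1) → A, a ∈ Lg A (n + 1) →
      ∃ c : Fin n → A, (fun i : Fin n => a i.castSucc + c i * a (Fin.last n)) ∈ Lg A n :=
  HasBsrLE.of_denseRange (isOpen_Lg B n) f hfd hfull hBsrB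

/-- If `f : A → B` is a continuous dense `n`-full morphism of unital Banach algebras and
`Bsr(B) ≤ n`, then `Bsr(A) ≤ n`. -/
theorem stmt_11 (A B : Type*) [NormedRing A] [NormedAlgebra ℂ A] [CompleteSpace A]
    [NormedRing B] [NormedAlgebra ℂ B] [CompleteSpace B]
    (f : A →+* B) (hfc : Continuous f) (hfd : DenseRange f)
    (n : ℕ)
    (hfull : ∀ a : Fin n → A, (fun i => f (a i)) ∈ Lg B n → a ∈ Lg A n)
    (hBsrB : ∀ b : Fin (n + 1) → B, b ∈ Lg B (n + 1) →
      ∃ d : Fin n → B, (fun i : Fin n => b i.castSucc + d i * b (Fin.last n)) ∈ Lg B n) :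
    ∀ a : Fin (n + 1) → A, a ∈ Lg A (n + 1) →
      ∃ c : Fin n → A, (fun i : Fin n => a i.castSucc + c i * a (Fin.last n)) ∈ Lg A n :=
  stmt_11_general A B f hfd n hfull hBsrB
end

section
/- Let A and B be unital topological algebras and f : A → B a continuous algebra morphism with dense image. Then tsr(B) ≤ tsr(A): if Lg_n(A) is dense in A^n, then Lg_n(B) is dense in B^n. -/
/-- If `f : A → B` is a continuous algebra morphism with dense image between unital
topological algebras, and `Lg_n(A)` is dense in `A^n`, then `Lg_n(B)` is dense in `B^n`.
In particular `tsr(B) ≤ tsr(A)`. -/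
theorem stmt_12 (A B : Type*) [Ring A] [Algebra ℂ A] [TopologicalSpace A] [IsTopologicalRing A]
    [Ring B] [Algebra ℂ B] [TopologicalSpace B] [IsTopologicalRing B]
    (f : A →+* B) (hfc : Continuous f) (hfd : DenseRange f)
    (n : ℕ) (hA : Dense (Lg A n)) : Dense (Lg B n) := by
  set g : (Fin n → A) → (Fin n → B) := fun a i => f (a i) with hg
  have hgc : Continuous g := continuous_pi fun i => hfc.comp (continuous_apply i)
  have hgd : DenseRange g := by
    have : Set.range g = Set.univ.pi fun _ => Set.range f := by
      ext b
      simp only [Set.mem_range, Set.mem_pi, Set.mem_univ, forall_true_left, hg, funext_iff]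
      exact ⟨fun ⟨a, h⟩ i => ⟨a i, h i⟩, fun h => by
        choose a ha using h; exact ⟨a, ha⟩⟩
    rw [DenseRange, this]
    exact dense_pi _ fun i _ => hfd
  have h1 : Dense (g '' Lg A n) := hgd.dense_image hgc hA
  apply h1.mono
  rintro _ ⟨a, ⟨w, hw⟩, rfl⟩
  exact ⟨fun i => f (w i), by simp [hg, ← map_mul, ← map_sum, hw]⟩
end

section
/- Let f : A → B be an injective, dense and full morphism of commutative unital Banach algebras. Then the adjoint map f* : X(B) → X(A) between maximal ideal spaces (character spaces), given by f*(χ) = χ ∘ f, is a bijection. -/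
/-!
Injectivity holds because characters of a Banach algebra are continuous and `f` has dense range.
For surjectivity, given a character `χ` of `A`, the closure of `f (ker χ)` is an ideal of `B`,
since `f (ker χ)` is stable under multiplication by the dense subalgebra `f A`. It is proper:
the units of `B` form an open set, so otherwise some `f m` with `m ∈ ker χ` would be a unit, and
fullness would make `m` a unit. Any character of `B` vanishing on a maximal ideal containing this
ideal restricts to a character whose kernel contains `ker χ`, hence to `χ` itself.
-/

open WeakDual

theorem AlgHom.eq_of_ker_le {K A : Type*} [CommRing K] [Ring A] [Algebra K A]
    {φ χ : A →ₐ[K] K} (h : RingHom.ker χ ≤ RingHom.ker φ) : φ = χ := by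
  ext a
  have hker : a - algebraMap K A (χ a) ∈ RingHom.ker φ := h (by simp [RingHom.mem_ker])
  simpa [RingHom.mem_ker, sub_eq_zero] using hker

section DenseRange

variable {R S : Type*} [CommRing R] [CommRing S] [TopologicalSpace S] [IsTopologicalRing S]
  {f : R →+* S}

theorem Ideal.mul_mem_closure_image_of_denseRange (hf : DenseRange f) (I : Ideal R) (b : S)
    {x : S} (hx : x ∈ closure (f '' I)) : b * x ∈ closure (f '' I) :=
  map_mem_closure₂ continuous_mul (hf b) hx <| by
    rintro _ ⟨a, rfl⟩ _ ⟨m, hm, rfl⟩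
    exact ⟨a * m, I.mul_mem_left a hm, map_mul f a m⟩

def Ideal.closureImage (hf : DenseRange f) (I : Ideal R) : Ideal S where
  toAddSubmonoid := (I.toAddSubgroup.map f.toAddMonoidHom).topologicalClosure.toAddSubmonoid
  smul_mem' b _ hx := Ideal.mul_mem_closure_image_of_denseRange hf I b hx

theorem Ideal.apply_mem_closureImage (hf : DenseRange f) {I : Ideal R} {a : R} (ha : a ∈ I) :
    f a ∈ Ideal.closureImage hf I :=
  subset_closure ⟨a, ha, rfl⟩

theorem Ideal.closureImage_ne_top {S : Type*} [NormedCommRing S] [CompleteSpace S]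
    {f : R →+* S} (hf : DenseRange f) (hfull : ∀ a, IsUnit (f a) → IsUnit a) {I : Ideal R}
    (hI : I ≠ ⊤) : Ideal.closureImage hf I ≠ ⊤ := by
  intro htop
  have hone : (1 : S) ∈ Ideal.closureImage hf I := htop ▸ Submodule.mem_top
  obtain ⟨_, hunit, m, hm, rfl⟩ := mem_closure_iff.mp hone _ Units.isOpen isUnit_one
  exact hI (I.eq_top_of_isUnit_mem hm (hfull m hunit))

end DenseRange

section Characters

variable {A B : Type*} [CommRing A] [Algebra ℂ A]
  [NormedCommRing B] [NormedAlgebra ℂ B] [CompleteSpace B] {f : A →ₐ[ℂ] B}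

theorem AlgHom.comp_left_injective_of_denseRange (hf : DenseRange f) :
    Function.Injective (fun χ : B →ₐ[ℂ] ℂ => χ.comp f) := fun χ₁ χ₂ h =>
  DFunLike.coe_injective <|
    hf.equalizer (map_continuous χ₁) (map_continuous χ₂) (congrArg DFunLike.coe h)

theorem AlgHom.comp_left_surjective_of_denseRange_of_full (hf : DenseRange f)
    (hfull : ∀ a, IsUnit (f a) → IsUnit a) :
    Function.Surjective (fun χ : B →ₐ[ℂ] ℂ => χ.comp f) := by
  intro χ
  have hker : RingHom.ker χ ≠ ⊤ := RingHom.ker_ne_top (χ : A →+* ℂ)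
  have hf' : DenseRange (f : A →+* B) := hf
  obtain ⟨N, hN, hle⟩ := (Ideal.closureImage hf' _).exists_le_maximal
    (Ideal.closureImage_ne_top hf' hfull hker)
  refine ⟨CharacterSpace.equivAlgHom N.toCharacterSpace, AlgHom.eq_of_ker_le fun a ha => ?_⟩
  exact N.toCharacterSpace_apply_eq_zero_of_mem (hle (Ideal.apply_mem_closureImage hf' ha))

end Characters

theorem stmt_19_general (A B : Type*) [NormedCommRing A] [NormedAlgebra ℂ A]
    [NormedCommRing B] [NormedAlgebra ℂ B] [CompleteSpace B]
    (f : A →ₐ[ℂ] B) (hfd : DenseRange f) (hfull : ∀ a : A, IsUnit (f a) → IsUnit a) :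
    Function.Bijective (fun χ : B →ₐ[ℂ] ℂ => χ.comp f) :=
  ⟨AlgHom.comp_left_injective_of_denseRange hfd,
    AlgHom.comp_left_surjective_of_denseRange_of_full hfd hfull⟩

/-- If `f : A → B` is an injective, dense and full morphism of commutative unital Banach
algebras, then the adjoint map `f* : X(B) → X(A)`, `χ ↦ χ ∘ f`, between character spaces
is a bijection. -/
theorem stmt_19 (A B : Type*) [NormedCommRing A] [NormedAlgebra ℂ A] [CompleteSpace A]
    [NormedCommRing B] [NormedAlgebra ℂ B] [CompleteSpace B]
    (f : A →ₐ[ℂ] B) (hfc : Continuous f) (hinj : Function.Injective f)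
    (hfd : DenseRange f) (hfull : ∀ a : A, IsUnit (f a) → IsUnit a) :
    Function.Bijective (fun χ : B →ₐ[ℂ] ℂ => χ.comp f) :=
  stmt_19_general A B f hfd hfull
end
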